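/- Assume λ₁ > 0, λ₂ > 0, g₂ > 0, g₁ ≤ 0, −4m² < −λ₁/λ₂ < a < 0, and 0 ≤ −g₁/λ₁ ≤ κ·F_a(0). Then every zero of S in the domain ℂ \ (−∞, −4m²] is real and lies in (−4m², 0], and the number of such zeros is either one or two; in particular at least one zero exists. -/

import Mathlib

open MeasureTheory Complex Filter

/-- The half-line `(-∞, -4m²]` viewed as a subset of `ℂ`. -/
def cutSet (m : ℝ) : Set ℂ := {z : ℂ | z.im = 0 ∧ z.re ≤ -4 * m ^ 2}

/-- The function `F_a(z) = ∫_{4m²}^∞ √(1 - 4m²/u) (1/(u+a) - 1/(u+z)) du`. -/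
noncomputable def Fa (m a : ℝ) (z : ℂ) : ℂ :=
  ∫ u in Set.Ioi (4 * m ^ 2), (Real.sqrt (1 - 4 * m ^ 2 / u) : ℂ) *
    (1 / ((u : ℂ) + (a : ℂ)) - 1 / ((u : ℂ) + z))

/-- The function `S(z) = -(λ₁ + λ₂ z) κ F_a(z) - (g₁ + g₂ z)`. -/
noncomputable def Sfun (m a κ g₁ g₂ l₁ l₂ : ℝ) (z : ℂ) : ℂ :=
  -((l₁ : ℂ) + (l₂ : ℂ) * z) * (κ : ℂ) * Fa m a z - ((g₁ : ℂ) + (g₂ : ℂ) * z)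

/-!
`F_a` is a Pick function: `Im F_a(z) = Im z · ∫ √(1 - 4m²/u) / |u + z|² du` has the sign of
`Im z`. A zero of `S` solves `κ F_a(z) = -(g₁ + g₂ z) / (l₁ + l₂ z)`, and since `g₁ l₂ < g₂ l₁`
this Möbius map sends the upper half-plane to the lower one, so every zero is real. On the real
axis `t ↦ F_a(t)` is strictly increasing while the Möbius map is strictly decreasing on each side
of its pole `-l₁/l₂`, so there is at most one zero on each side and none at the pole. For `t > 0`
the bound `-g₁ ≤ κ l₁ F_a(0)` forces `S(t) < 0`, and `S(-l₁/l₂) > 0 ≥ S(0)` together with the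
continuity of `F_a` on the real axis (dominated convergence) yields a zero.
-/

open Set Asymptotics

noncomputable def FaIntegrand (m a : ℝ) (z : ℂ) (u : ℝ) : ℂ :=
  (Real.sqrt (1 - 4 * m ^ 2 / u) : ℂ) * (1 / ((u : ℂ) + (a : ℂ)) - 1 / ((u : ℂ) + z))

lemma Fa_eq_integral_FaIntegrand (m a : ℝ) (z : ℂ) :
    Fa m a z = ∫ u in Ioi (4 * m ^ 2), FaIntegrand m a z u := rfl

lemma ofReal_notMem_cutSet {m t : ℝ} (ht : -4 * m ^ 2 < t) : (t : ℂ) ∉ cutSet m := by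
  simp only [cutSet, mem_ofPred_eq, ofReal_im, ofReal_re, true_and, not_le]
  exact ht

lemma ofReal_add_ne_zero_of_notMem_cutSet {m u : ℝ} {z : ℂ} (hz : z ∉ cutSet m)
    (hu : 4 * m ^ 2 ≤ u) : (u : ℂ) + z ≠ 0 := by
  intro h
  obtain rfl : z = -u := eq_neg_of_add_eq_zero_right h
  exact hz ⟨by simp, by simpa using hu⟩

lemma half_le_norm_ofReal_add {z : ℂ} {u : ℝ} (hu : 2 * ‖z‖ ≤ u) : u / 2 ≤ ‖(u : ℂ) + z‖ := by
  have h := norm_sub_norm_le (u : ℂ) (-z)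
  rw [norm_neg, sub_neg_eq_add, Complex.norm_real,
    Real.norm_of_nonneg (by linarith [norm_nonneg z])] at h
  linarith

lemma ofReal_add_ne_zero_of_two_mul_norm_lt {z : ℂ} {u : ℝ} (hu : 2 * ‖z‖ < u) :
    (u : ℂ) + z ≠ 0 :=
  norm_pos_iff.mp <|
    (by linarith [norm_nonneg z] : 0 < u / 2).trans_le (half_le_norm_ofReal_add hu.le)

lemma isBigO_inv_ofReal_add (z : ℂ) : (fun u : ℝ => ((u : ℂ) + z)⁻¹) =O[atTop] fun u => u⁻¹ := by
  refine IsBigO.of_bound 2 ?_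
  filter_upwards [eventually_ge_atTop (2 * ‖z‖), eventually_gt_atTop 0] with u hu hu0
  have h := half_le_norm_ofReal_add hu
  rw [norm_inv, norm_inv, Real.norm_of_nonneg hu0.le, ← div_eq_mul_inv, inv_le_comm₀ (by linarith)
    (by positivity), inv_div]
  exact h

lemma FaIntegrand_isBigO (m a : ℝ) (z : ℂ) :
    FaIntegrand m a z =O[atTop] fun u => u ^ (-2 : ℝ) := by
  have hρ : (fun u : ℝ => (Real.sqrt (1 - 4 * m ^ 2 / u) : ℂ)) =O[atTop] fun _ => (1 : ℝ) := by
    refine IsBigO.of_bound 1 ?_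
    filter_upwards [eventually_gt_atTop 0] with u hu
    rw [Complex.norm_real, Real.norm_of_nonneg (Real.sqrt_nonneg _), norm_one, one_mul,
      Real.sqrt_le_one]
    have : 0 ≤ 4 * m ^ 2 / u := by positivity
    linarith
  have hprod := hρ.mul ((isBigO_const_const (z - a) one_ne_zero atTop).mul
    ((isBigO_inv_ofReal_add a).mul (isBigO_inv_ofReal_add z)))
  refine hprod.congr' ?_ ?_
  · filter_upwards [eventually_gt_atTop (2 * ‖(a : ℂ)‖), eventually_gt_atTop (2 * ‖z‖)]
      with u hua huz
    have ha := ofReal_add_ne_zero_of_two_mul_norm_lt hua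
    have hz := ofReal_add_ne_zero_of_two_mul_norm_lt huz
    simp only [FaIntegrand]
    field_simp
    ring
  · filter_upwards [eventually_gt_atTop 0] with u hu
    rw [Real.rpow_neg hu.le, Real.rpow_two, one_mul, one_mul, ← mul_inv, sq]

lemma continuousOn_FaIntegrand {m a : ℝ} {z : ℂ} (hm : 0 < m) (ha : -4 * m ^ 2 < a)
    (hz : z ∉ cutSet m) : ContinuousOn (FaIntegrand m a z) (Ici (4 * m ^ 2)) := by
  intro u hu
  have hu0 : u ≠ 0 := (lt_of_lt_of_le (by positivity) hu).ne'
  have hua := ofReal_add_ne_zero_of_notMem_cutSet (ofReal_notMem_cutSet ha) hu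
  have huz := ofReal_add_ne_zero_of_notMem_cutSet hz hu
  apply ContinuousAt.continuousWithinAt
  unfold FaIntegrand
  fun_prop (disch := assumption)

lemma integrableOn_FaIntegrand {m a : ℝ} {z : ℂ} (hm : 0 < m) (ha : -4 * m ^ 2 < a)
    (hz : z ∉ cutSet m) : IntegrableOn (FaIntegrand m a z) (Ioi (4 * m ^ 2)) :=
  (((continuousOn_FaIntegrand hm ha hz).locallyIntegrableOn measurableSet_Ici)
    |>.integrableOn_of_isBigO_atTop (FaIntegrand_isBigO m a z)
      (integrableAtFilter_rpow_atTop_iff.mpr (by norm_num))).mono_set Ioi_subset_Ici_self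

lemma im_FaIntegrand (m a : ℝ) (z : ℂ) (u : ℝ) :
    (FaIntegrand m a z u).im = Real.sqrt (1 - 4 * m ^ 2 / u) * z.im / normSq ((u : ℂ) + z) := by
  simp only [FaIntegrand, one_div, mul_im, ofReal_re, ofReal_im, sub_im, inv_im, add_im, zero_mul,
    add_zero, zero_add, ← ofReal_add, ← ofReal_inv, neg_div, sub_neg_eq_add]
  ring

lemma im_mul_im_Fa_nonneg {m a : ℝ} {z : ℂ} (hm : 0 < m) (ha : -4 * m ^ 2 < a)
    (hz : z ∉ cutSet m) : 0 ≤ z.im * (Fa m a z).im := by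
  have him := integral_im (integrableOn_FaIntegrand hm ha hz)
  simp only [RCLike.im_to_complex] at him
  rw [Fa_eq_integral_FaIntegrand, ← him, ← integral_const_mul]
  refine integral_nonneg fun u => ?_
  rw [im_FaIntegrand, mul_div_assoc', ← mul_assoc, mul_comm z.im, mul_assoc, ← sq]
  have := normSq_nonneg ((u : ℂ) + z)
  positivity

noncomputable def FaRealIntegrand (m a t u : ℝ) : ℝ :=
  Real.sqrt (1 - 4 * m ^ 2 / u) * (1 / (u + a) - 1 / (u + t))

noncomputable def FaReal (m a t : ℝ) : ℝ :=
  ∫ u in Ioi (4 * m ^ 2), FaRealIntegrand m a t u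

lemma FaIntegrand_ofReal (m a t u : ℝ) : FaIntegrand m a t u = FaRealIntegrand m a t u := by
  simp only [FaIntegrand, FaRealIntegrand]
  push_cast
  ring

lemma Fa_ofReal (m a t : ℝ) : Fa m a t = FaReal m a t := by
  simp_rw [Fa_eq_integral_FaIntegrand, FaIntegrand_ofReal]
  exact integral_ofReal

lemma integrableOn_FaRealIntegrand {m a t : ℝ} (hm : 0 < m) (ha : -4 * m ^ 2 < a)
    (ht : -4 * m ^ 2 < t) : IntegrableOn (FaRealIntegrand m a t) (Ioi (4 * m ^ 2)) := by
  have h := (integrableOn_FaIntegrand hm ha (ofReal_notMem_cutSet ht)).re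
  simp only [FaIntegrand_ofReal, RCLike.re_to_complex, ofReal_re] at h
  exact h

lemma FaReal_self (m a : ℝ) : FaReal m a a = 0 := by
  simp [FaReal, FaRealIntegrand]

lemma strictMonoOn_FaRealIntegrand {m a u : ℝ} (hu : 4 * m ^ 2 < u) :
    StrictMonoOn (fun t => FaRealIntegrand m a t u) (Ioi (-4 * m ^ 2)) := by
  intro t₁ ht₁ t₂ _ h₁₂
  have hρ : 0 < Real.sqrt (1 - 4 * m ^ 2 / u) := by
    rw [Real.sqrt_pos, sub_pos, div_lt_one ((by positivity : (0 : ℝ) ≤ 4 * m ^ 2).trans_lt hu)]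
    exact hu
  have hut₁ : 0 < u + t₁ := by simp only [mem_Ioi] at ht₁; linarith
  simp only [FaRealIntegrand]
  gcongr

lemma setIntegral_pos_of_forall_pos {s : Set ℝ} {f : ℝ → ℝ} (hs : MeasurableSet s)
    (hvol : volume s ≠ 0) (hf : IntegrableOn f s) (hpos : ∀ u ∈ s, 0 < f u) :
    0 < ∫ u in s, f u := by
  rw [setIntegral_pos_iff_support_of_nonneg_ae
    (ae_restrict_of_forall_mem hs fun u hu => (hpos u hu).le) hf]
  rwa [inter_eq_right.mpr fun u hu => Function.mem_support.mpr (hpos u hu).ne', pos_iff_ne_zero]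

lemma strictMonoOn_FaReal {m a : ℝ} (hm : 0 < m) (ha : -4 * m ^ 2 < a) :
    StrictMonoOn (FaReal m a) (Ioi (-4 * m ^ 2)) := by
  intro t₁ ht₁ t₂ ht₂ h₁₂
  have hi₁ := integrableOn_FaRealIntegrand hm ha ht₁
  have hi₂ := integrableOn_FaRealIntegrand hm ha ht₂
  rw [← sub_pos, FaReal, FaReal, ← integral_sub hi₂ hi₁]
  refine setIntegral_pos_of_forall_pos measurableSet_Ioi (by simp) (hi₂.sub hi₁) fun u hu => ?_
  exact sub_pos.mpr (strictMonoOn_FaRealIntegrand hu ht₁ ht₂ h₁₂)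

lemma continuousOn_FaReal {m a p q : ℝ} (hm : 0 < m) (ha : -4 * m ^ 2 < a) (hp : -4 * m ^ 2 < p)
    (hpq : p ≤ q) : ContinuousOn (FaReal m a) (Icc p q) := by
  have hIcc : Icc p q ⊆ Ioi (-4 * m ^ 2) := fun t ht => hp.trans_le ht.1
  -- the integrand is monotone in `t`, hence dominated by its values at the endpoints
  refine continuousOn_of_dominated
    (bound := fun u => max |FaRealIntegrand m a p u| |FaRealIntegrand m a q u|)
    (fun t ht => (integrableOn_FaRealIntegrand hm ha (hIcc ht)).aestronglyMeasurable)
    (fun t ht => ?_) ?_ ?_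
  · filter_upwards [ae_restrict_mem measurableSet_Ioi] with u hu
    have hmono := (strictMonoOn_FaRealIntegrand (a := a) hu).monotoneOn
    exact abs_le_max_abs_abs (hmono (hIcc ⟨le_rfl, hpq⟩) (hIcc ht) ht.1)
      (hmono (hIcc ht) (hIcc ⟨hpq, le_rfl⟩) ht.2)
  · exact (integrableOn_FaRealIntegrand hm ha hp).abs.sup
      (integrableOn_FaRealIntegrand hm ha (hIcc ⟨hpq, le_rfl⟩)).abs
  · filter_upwards [ae_restrict_mem measurableSet_Ioi] with u hu
    intro t ht
    have hut : u + t ≠ 0 := by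
      have := hIcc ht; simp only [mem_Ioi] at hu this; linarith
    apply ContinuousAt.continuousWithinAt
    unfold FaRealIntegrand
    fun_prop (disch := assumption)

lemma Set.exists_subset_pair_of_subset_union {α : Type*} [Nonempty α] {s t u : Set α}
    (ht : t.Subsingleton) (hu : u.Subsingleton) (h : s ⊆ t ∪ u) : ∃ x y, s ⊆ {x, y} := by
  have hsingle : ∀ v : Set α, v.Subsingleton → ∃ x, v ⊆ {x} := fun v hv =>
    hv.eq_empty_or_singleton.elim (fun h => ⟨Classical.arbitrary α, by simp [h]⟩)
      fun ⟨x, hx⟩ => ⟨x, hx.le⟩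
  obtain ⟨x, hx⟩ := hsingle t ht
  obtain ⟨y, hy⟩ := hsingle u hu
  exact ⟨x, y, h.trans ((union_subset_union hx hy).trans_eq (insert_eq x {y}).symm)⟩

lemma im_eq_zero_of_pick_eq_moebius {κ g₁ g₂ l₁ l₂ : ℝ} {z F : ℂ} (hκ : 0 < κ)
    (hgl : g₁ * l₂ < g₂ * l₁) (hF : 0 ≤ z.im * F.im)
    (h : -((l₁ : ℂ) + (l₂ : ℂ) * z) * (κ : ℂ) * F - ((g₁ : ℂ) + (g₂ : ℂ) * z) = 0) :
    z.im = 0 := by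
  have hre := congrArg re h
  have him := congrArg im h
  simp only [sub_re, sub_im, mul_re, mul_im, neg_re, neg_im, add_re, add_im, ofReal_re,
    ofReal_im, zero_re, zero_im, zero_mul, mul_zero, sub_zero, add_zero, zero_add] at hre him
  by_contra hy
  have key : κ * (z.im * F.im) * ((l₁ + l₂ * z.re) ^ 2 + (l₂ * z.im) ^ 2) =
      z.im ^ 2 * (g₁ * l₂ - g₂ * l₁) := by
    linear_combination -z.im * ((l₁ + l₂ * z.re) * him - l₂ * z.im * hre)
  have hlhs : 0 ≤ κ * (z.im * F.im) * ((l₁ + l₂ * z.re) ^ 2 + (l₂ * z.im) ^ 2) := by positivity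
  have hrhs : z.im ^ 2 * (g₁ * l₂ - g₂ * l₁) < 0 :=
    mul_neg_of_pos_of_neg (by positivity) (by linarith)
  linarith

lemma strictMonoOn_moebius {g₁ g₂ l₁ l₂ : ℝ} {s : Set ℝ} (hgl : g₁ * l₂ < g₂ * l₁)
    (hs : ∀ x ∈ s, ∀ y ∈ s, 0 < (l₁ + l₂ * x) * (l₁ + l₂ * y)) :
    StrictMonoOn (fun t => (g₁ + g₂ * t) / (l₁ + l₂ * t)) s := by
  intro x hx y hy hxy
  have hD := hs x hx y hy
  have hx0 : l₁ + l₂ * x ≠ 0 := left_ne_zero_of_mul hD.ne'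
  have hy0 : l₁ + l₂ * y ≠ 0 := right_ne_zero_of_mul hD.ne'
  rw [← sub_pos, div_sub_div _ _ hy0 hx0]
  refine div_pos ?_ (by rwa [mul_comm])
  nlinarith

noncomputable def SfunReal (m a κ g₁ g₂ l₁ l₂ t : ℝ) : ℝ :=
  -(l₁ + l₂ * t) * κ * FaReal m a t - (g₁ + g₂ * t)

section Zeros

variable {m a κ g₁ g₂ l₁ l₂ : ℝ}

lemma Sfun_ofReal (t : ℝ) : Sfun m a κ g₁ g₂ l₁ l₂ t = SfunReal m a κ g₁ g₂ l₁ l₂ t := by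
  simp only [Sfun, SfunReal, Fa_ofReal]
  push_cast
  ring

lemma exists_ofReal_of_Sfun_eq_zero (hm : 0 < m) (ha : -4 * m ^ 2 < a) (hκ : 0 < κ)
    (hgl : g₁ * l₂ < g₂ * l₁) {z : ℂ} (hz : z ∉ cutSet m) (hS : Sfun m a κ g₁ g₂ l₁ l₂ z = 0) :
    ∃ t : ℝ, -4 * m ^ 2 < t ∧ SfunReal m a κ g₁ g₂ l₁ l₂ t = 0 ∧ (t : ℂ) = z := by
  have him : z.im = 0 := im_eq_zero_of_pick_eq_moebius hκ hgl (im_mul_im_Fa_nonneg hm ha hz) hS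
  have hz' : (z.re : ℂ) = z := Complex.ext (by simp) (by simp [him])
  refine ⟨z.re, ?_, ?_, hz'⟩
  · by_contra! hle
    exact hz ⟨him, hle⟩
  · rw [← hz', Sfun_ofReal] at hS
    exact_mod_cast hS

lemma SfunReal_pos_of_affine_eq_zero (hl₁ : 0 < l₁) (hl₂ : 0 < l₂) (hg₁ : g₁ ≤ 0) (hg₂ : 0 < g₂)
    {t : ℝ} (ht : l₁ + l₂ * t = 0) : 0 < SfunReal m a κ g₁ g₂ l₁ l₂ t := by
  have htneg : t < 0 := by nlinarith
  rw [SfunReal, ht]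
  nlinarith

lemma SfunReal_neg_of_pos (hm : 0 < m) (ha : -4 * m ^ 2 < a) (ha0 : a < 0) (hκ : 0 < κ)
    (hl₁ : 0 < l₁) (hl₂ : 0 ≤ l₂) (hg₂ : 0 < g₂) (hS0 : -g₁ ≤ κ * FaReal m a 0 * l₁) {t : ℝ}
    (ht : 0 < t) : SfunReal m a κ g₁ g₂ l₁ l₂ t < 0 := by
  have hmem : ∀ {x : ℝ}, a ≤ x → x ∈ Ioi (-4 * m ^ 2) := fun hx => ha.trans_le hx
  have hF0 : 0 < FaReal m a 0 := by
    simpa [FaReal_self] using strictMonoOn_FaReal hm ha (hmem le_rfl) (hmem ha0.le) ha0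
  have hFt : FaReal m a 0 < FaReal m a t :=
    strictMonoOn_FaReal hm ha (hmem ha0.le) (hmem (ha0.trans ht).le) ht
  have hFt0 : 0 < FaReal m a t := hF0.trans hFt
  have hprod : κ * FaReal m a 0 * l₁ < κ * FaReal m a t * (l₁ + l₂ * t) := by
    have : 0 ≤ κ * FaReal m a t * (l₂ * t) := by positivity
    nlinarith [mul_lt_mul_of_pos_left hFt hκ]
  rw [SfunReal]
  nlinarith

lemma subsingleton_zeros_SfunReal (hm : 0 < m) (ha : -4 * m ^ 2 < a) (hκ : 0 < κ)
    (hgl : g₁ * l₂ < g₂ * l₁) {s : Set ℝ} (hs : s ⊆ Ioi (-4 * m ^ 2))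
    (hD : ∀ x ∈ s, ∀ y ∈ s, 0 < (l₁ + l₂ * x) * (l₁ + l₂ * y)) :
    {t ∈ s | SfunReal m a κ g₁ g₂ l₁ l₂ t = 0}.Subsingleton := by
  have hmono : StrictMonoOn (fun t => κ * FaReal m a t + (g₁ + g₂ * t) / (l₁ + l₂ * t)) s :=
    StrictMonoOn.add (fun x hx y hy hxy => mul_lt_mul_of_pos_left
      ((strictMonoOn_FaReal hm ha).mono hs hx hy hxy) hκ) (strictMonoOn_moebius hgl hD)
  have hzero : ∀ t ∈ {t ∈ s | SfunReal m a κ g₁ g₂ l₁ l₂ t = 0},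
      κ * FaReal m a t + (g₁ + g₂ * t) / (l₁ + l₂ * t) = 0 := by
    rintro t ⟨hts, hSt⟩
    have ht0 : l₁ + l₂ * t ≠ 0 := left_ne_zero_of_mul (hD t hts t hts).ne'
    rw [SfunReal] at hSt
    rw [← mul_left_inj' ht0, add_mul, div_mul_cancel₀ _ ht0, zero_mul]
    linear_combination -hSt
  exact fun x hx y hy => hmono.injOn hx.1 hy.1 ((hzero x hx).trans (hzero y hy).symm)

lemma exists_zeros_SfunReal_subset_pair (hm : 0 < m) (ha : -4 * m ^ 2 < a) (hκ : 0 < κ)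
    (hl₁ : 0 < l₁) (hl₂ : 0 < l₂) (hg₁ : g₁ ≤ 0) (hg₂ : 0 < g₂) :
    ∃ t₁ t₂, {t | -4 * m ^ 2 < t ∧ SfunReal m a κ g₁ g₂ l₁ l₂ t = 0} ⊆ {t₁, t₂} := by
  have hgl : g₁ * l₂ < g₂ * l₁ := by nlinarith
  refine Set.exists_subset_pair_of_subset_union
    (subsingleton_zeros_SfunReal hm ha hκ hgl (s := {t | -4 * m ^ 2 < t ∧ l₁ + l₂ * t < 0})
      (fun t ht => ht.1) fun x hx y hy => mul_pos_of_neg_of_neg hx.2 hy.2)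
    (subsingleton_zeros_SfunReal hm ha hκ hgl (s := {t | -4 * m ^ 2 < t ∧ 0 < l₁ + l₂ * t})
      (fun t ht => ht.1) fun x hx y hy => mul_pos hx.2 hy.2) fun t ⟨ht, hSt⟩ => ?_
  rcases lt_or_gt_of_ne fun h => (SfunReal_pos_of_affine_eq_zero hl₁ hl₂ hg₁ hg₂ h).ne' hSt
    with hneg | hpos
  exacts [Or.inl ⟨⟨ht, hneg⟩, hSt⟩, Or.inr ⟨⟨ht, hpos⟩, hSt⟩]

end Zeros

theorem stmt_19_general (m a lam hb κ g₁ g₂ l₁ l₂ : ℝ) (hm : 0 < m)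
    (hlam : 0 < lam) (hhb : 0 < hb) (hκ : κ = lam * hb / (16 * Real.pi ^ 2))
    (hl₁ : 0 < l₁) (hl₂ : 0 < l₂) (hg₂ : 0 < g₂) (hg₁ : g₁ ≤ 0)
    (h1 : -4 * m ^ 2 < -l₁ / l₂) (h2 : -l₁ / l₂ < a) (h3 : a < 0)
    (h5 : -g₁ / l₁ ≤ κ * (Fa m a (0 : ℂ)).re) :
    (∀ z : ℂ, z ∉ cutSet m → Sfun m a κ g₁ g₂ l₁ l₂ z = 0 →
      z.im = 0 ∧ -4 * m ^ 2 < z.re ∧ z.re ≤ 0) ∧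
    (∃ z₁ z₂ : ℂ, {z : ℂ | z ∉ cutSet m ∧ Sfun m a κ g₁ g₂ l₁ l₂ z = 0} ⊆ {z₁, z₂}) ∧
    {z : ℂ | z ∉ cutSet m ∧ Sfun m a κ g₁ g₂ l₁ l₂ z = 0}.Nonempty := by
  have hκ : 0 < κ := by rw [hκ]; positivity
  have ha : -4 * m ^ 2 < a := h1.trans h2
  have hgl : g₁ * l₂ < g₂ * l₁ := by nlinarith
  have hS0 : -g₁ ≤ κ * FaReal m a 0 * l₁ := by
    rwa [← ofReal_zero, Fa_ofReal, ofReal_re, div_le_iff₀ hl₁] at h5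
  have hpole : l₁ + l₂ * (-l₁ / l₂) = 0 := by field_simp; ring
  refine ⟨fun z hz hS => ?_, ?_, ?_⟩
  · obtain ⟨t, ht, hSt, rfl⟩ := exists_ofReal_of_Sfun_eq_zero hm ha hκ hgl hz hS
    exact ⟨ofReal_im t, ht, not_lt.mp fun htpos =>
      (SfunReal_neg_of_pos hm ha h3 hκ hl₁ hl₂.le hg₂ hS0 htpos).ne hSt⟩
  · obtain ⟨t₁, t₂, hpair⟩ := exists_zeros_SfunReal_subset_pair hm ha hκ hl₁ hl₂ hg₁ hg₂
    refine ⟨t₁, t₂, fun z ⟨hz, hS⟩ => ?_⟩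
    obtain ⟨t, ht, hSt, rfl⟩ := exists_ofReal_of_Sfun_eq_zero hm ha hκ hgl hz hS
    rcases hpair ⟨ht, hSt⟩ with rfl | rfl <;> simp
  · have hc0 : -l₁ / l₂ ≤ 0 := (div_neg_of_neg_of_pos (neg_neg_of_pos hl₁) hl₂).le
    have hcont : ContinuousOn (SfunReal m a κ g₁ g₂ l₁ l₂) (Icc (-l₁ / l₂) 0) := by
      have := continuousOn_FaReal hm ha h1 hc0
      unfold SfunReal
      fun_prop
    obtain ⟨t, ht, hSt⟩ := intermediate_value_Icc' hc0 hcont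
      ⟨by rw [SfunReal]; nlinarith, (SfunReal_pos_of_affine_eq_zero hl₁ hl₂ hg₁ hg₂ hpole).le⟩
    exact ⟨t, ofReal_notMem_cutSet (h1.trans_le ht.1), by rw [Sfun_ofReal, hSt, ofReal_zero]⟩

theorem stmt_19 (m a lam hb κ g₁ g₂ l₁ l₂ : ℝ) (hm : 0 < m)
    (hlam : 0 < lam) (hhb : 0 < hb) (hκ : κ = lam * hb / (16 * Real.pi ^ 2))
    (hl₁ : 0 < l₁) (hl₂ : 0 < l₂) (hg₂ : 0 < g₂) (hg₁ : g₁ ≤ 0)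
    (h1 : -4 * m ^ 2 < -l₁ / l₂) (h2 : -l₁ / l₂ < a) (h3 : a < 0)
    (h4 : 0 ≤ -g₁ / l₁) (h5 : -g₁ / l₁ ≤ κ * (Fa m a (0 : ℂ)).re) :
    (∀ z : ℂ, z ∉ cutSet m → Sfun m a κ g₁ g₂ l₁ l₂ z = 0 →
      z.im = 0 ∧ -4 * m ^ 2 < z.re ∧ z.re ≤ 0) ∧
    (∃ z₁ z₂ : ℂ, {z : ℂ | z ∉ cutSet m ∧ Sfun m a κ g₁ g₂ l₁ l₂ z = 0} ⊆ {z₁, z₂}) ∧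
    {z : ℂ | z ∉ cutSet m ∧ Sfun m a κ g₁ g₂ l₁ l₂ z = 0}.Nonempty :=
  stmt_19_general m a lam hb κ g₁ g₂ l₁ l₂ hm hlam hhb hκ hl₁ hl₂ hg₂ hg₁ h1 h2 h3 h5
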